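/- arXiv:1904.12258 — 3 statements merged into one kernel-verified Lean document; each statement's English description precedes it below -/
import Mathlib

section
/- Let α, β, k > 0 and f as above. For any L, T₀ > 0 with T₀ · f(L/T₀) ≥ A₀ > 0, we have αL + βT₀ ≥ σA₀, where σ = αγ + βγ²/(4kγ - 2) and γ = (4αk + β + √((4αk+β)β))/(2k(4αk+β)). -/
noncomputable def f (k d : ℝ) : ℝ := if d ≤ 2*k then d*(2*k - d/2) else 2*k^2

/- After the substitution d = L / T₀ the claim is the pointwise bound σ f(d) ≤ α d + β.
On d ≤ 2k this says that the quadratic σ d²/2 - (2σk - α) d + β is nonnegative, and σ is exactly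
the value for which its discriminant (2σk - α)² - 2σβ vanishes; beyond 2k, f is constant while
α d + β keeps increasing. -/

section PointwiseBound

variable {α β k σ : ℝ}

lemma mul_mul_sub_half_le_of_sq_eq (hσ : 0 < σ) (hdisc : (2*σ*k - α)^2 = 2*σ*β) (d : ℝ) :
    σ * (d * (2*k - d/2)) ≤ α*d + β := by
  have hsq : 2*σ * (α*d + β - σ * (d * (2*k - d/2))) = (σ*d - (2*σ*k - α))^2 := by
    linear_combination (-1 : ℝ) * hdisc
  have hnonneg : 0 ≤ α*d + β - σ * (d * (2*k - d/2)) :=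
    nonneg_of_mul_nonneg_right (hsq ▸ sq_nonneg _) (by positivity)
  linarith

lemma mul_f_le_of_sq_eq (hα : 0 ≤ α) (hσ : 0 < σ) (hdisc : (2*σ*k - α)^2 = 2*σ*β) (d : ℝ) :
    σ * f k d ≤ α*d + β := by
  unfold f
  split_ifs with hd
  · exact mul_mul_sub_half_le_of_sq_eq hσ hdisc d
  · calc σ * (2*k^2) = σ * (2*k * (2*k - 2*k/2)) := by ring
      _ ≤ α*(2*k) + β := mul_mul_sub_half_le_of_sq_eq hσ hdisc (2*k)
      _ ≤ α*d + β := by gcongr; linarith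

end PointwiseBound

lemma mul_le_of_le_mul_f {α β k σ A L T : ℝ} (hσ : 0 ≤ σ) (hT : 0 < T)
    (hf : ∀ d, σ * f k d ≤ α*d + β) (hA : A ≤ T * f k (L/T)) :
    σ*A ≤ α*L + β*T :=
  calc σ*A ≤ σ * (T * f k (L/T)) := mul_le_mul_of_nonneg_left hA hσ
    _ = T * (σ * f k (L/T)) := by ring
    _ ≤ T * (α*(L/T) + β) := mul_le_mul_of_nonneg_left (hf _) hT.le
    _ = α*L + β*T := by field_simp

section Constants

variable {α β k c s : ℝ}

-- (c, s) parametrize (α, β): in the theorem c = 4αk + β and s = √(cβ)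
lemma coeffs_eq_of_sq_eq (hk : k ≠ 0) (hc : c ≠ 0) (hcdef : c = 4*α*k + β) (hs2 : s^2 = c*β) :
    α = (c^2 - s^2) / (4*k*c) ∧ β = s^2 / c := by
  constructor
  · field_simp
    linear_combination hs2 - c * hcdef
  · field_simp
    linear_combination -hs2

lemma sigma_eq_closed_form (hk : k ≠ 0) (hc : c ≠ 0)
    (hα : α = (c^2 - s^2) / (4*k*c)) (hβ : β = s^2 / c) {γ : ℝ} (hγ : γ = (c + s) / (2*k*c)) :
    α*γ + β*γ^2/(4*k*γ - 2) = (c + s)^2 / (8*k^2*c) := by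
  have hden : 4*k*γ - 2 = 2*s/c := by
    rw [hγ]; field_simp; ring
  rw [hden, hγ, hα, hβ]
  field_simp
  ring

lemma sq_two_mul_sigma_sub_eq (hk : k ≠ 0) (hc : c ≠ 0)
    (hα : α = (c^2 - s^2) / (4*k*c)) (hβ : β = s^2 / c) {σ : ℝ}
    (hσ : σ = (c + s)^2 / (8*k^2*c)) :
    (2*σ*k - α)^2 = 2*σ*β := by
  rw [hσ, hα, hβ]
  field_simp
  ring

end Constants

theorem stmt7_general (α β k A₀ : ℝ) (hα : 0 < α) (hβ : 0 < β) (hk : 0 < k)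
    (γ : ℝ) (hγ : γ = (4*α*k + β + Real.sqrt ((4*α*k+β)*β)) / (2*k*(4*α*k+β)))
    (σ : ℝ) (hσ : σ = α*γ + β*γ^2/(4*k*γ - 2)) :
    ∀ L T₀ : ℝ, 0 < L → 0 < T₀ → A₀ ≤ T₀ * f k (L/T₀) → σ*A₀ ≤ α*L + β*T₀ := by
  intro L T₀ _ hT hA
  set c := 4*α*k + β with hcdef
  set s := Real.sqrt (c*β)
  have hc : 0 < c := by positivity
  have hs2 : s^2 = c*β := Real.sq_sqrt (by positivity)
  obtain ⟨hα', hβ'⟩ := coeffs_eq_of_sq_eq hk.ne' hc.ne' hcdef hs2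
  have hσ' : σ = (c + s)^2 / (8*k^2*c) :=
    hσ.trans (sigma_eq_closed_form hk.ne' hc.ne' hα' hβ' hγ)
  have hσpos : 0 < σ := by rw [hσ']; positivity
  have hdisc := sq_two_mul_sigma_sub_eq hk.ne' hc.ne' hα' hβ' hσ'
  exact mul_le_of_le_mul_f hσpos.le hT (mul_f_le_of_sq_eq hα.le hσpos hdisc) hA

theorem stmt7 (α β k A₀ : ℝ) (hα : 0 < α) (hβ : 0 < β) (hk : 0 < k) (hA : 0 < A₀)
    (γ : ℝ) (hγ : γ = (4*α*k + β + Real.sqrt ((4*α*k+β)*β)) / (2*k*(4*α*k+β)))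
    (σ : ℝ) (hσ : σ = α*γ + β*γ^2/(4*k*γ - 2)) :
    ∀ L T₀ : ℝ, 0 < L → 0 < T₀ → A₀ ≤ T₀ * f k (L/T₀) → σ*A₀ ≤ α*L + β*T₀ :=
  stmt7_general α β k A₀ hα hβ hk γ hγ σ hσ
end

section
/- The area of the set of points of ℝ² within ℓ¹-distance r of a rectifiable curve of length P is at most 2rP + 2r². -/
/-!
Cut `[0, 1]` into `N` pieces. By the triangle inequality each piece of the curve lies within
`P / (2N)` of the midpoint of its endpoints, so the `r`-neighbourhood of the curve is covered by a
chain of `N` balls of radius `r + P / (2N)`, and consecutive balls both contain the ball of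
radius `r` around their common node. Inclusion–exclusion along the chain bounds the area, for a
Haar measure `μ` on a plane, by `(N (r + P/(2N))² - (N - 1) r²) V = (r² + rP + P²/(4N)) V`
with `V = μ (closedBall 0 1)`; let `N → ∞`. For the `ℓ¹` norm `V = 2`.
-/

open MeasureTheory

def dist1 (p q : ℝ × ℝ) : ℝ := |p.1 - q.1| + |p.2 - q.2|

open Metric Set Filter Topology Module
open scoped NNReal ENNReal

theorem measure_biUnion_lt_succ_add_sum_inter_le {α : Type*} [MeasurableSpace α] (μ : Measure α)
    {A : ℕ → Set α} (hA : ∀ i, MeasurableSet (A i)) (n : ℕ) :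
    μ (⋃ i < n + 1, A i) + ∑ i ∈ Finset.range n, μ (A i ∩ A (i + 1)) ≤
      ∑ i ∈ Finset.range (n + 1), μ (A i) := by
  induction n with
  | zero => simp
  | succ n ih =>
    have hsplit : ⋃ i < n + 1 + 1, A i ⊆ (⋃ i < n + 1, A i) ∪ (A (n + 1) \ A n) := by
      have hAn : A n ⊆ ⋃ i < n + 1, A i :=
        subset_iUnion₂ (s := fun i (_ : i < n + 1) ↦ A i) n n.lt_succ_self
      rw [biUnion_lt_succ, ← union_sdiff_self]
      exact union_subset_union_right _ (sdiff_subset_sdiff_right hAn)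
    calc μ (⋃ i < n + 1 + 1, A i) + ∑ i ∈ Finset.range (n + 1), μ (A i ∩ A (i + 1))
        ≤ μ (⋃ i < n + 1, A i) + μ (A (n + 1) \ A n)
          + (∑ i ∈ Finset.range n, μ (A i ∩ A (i + 1)) + μ (A (n + 1) ∩ A n)) := by
          rw [Finset.sum_range_succ, inter_comm]
          gcongr
          exact (measure_mono hsplit).trans (measure_union_le _ _)
      _ = (μ (⋃ i < n + 1, A i) + ∑ i ∈ Finset.range n, μ (A i ∩ A (i + 1)))
          + (μ (A (n + 1) ∩ A n) + μ (A (n + 1) \ A n)) := by ring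
      _ ≤ ∑ i ∈ Finset.range (n + 1 + 1), μ (A i) := by
          rw [measure_inter_add_sdiff _ (hA n), Finset.sum_range_succ _ (n + 1)]
          gcongr

theorem exists_lt_succ_mem_Icc_div (n : ℕ) {t : ℝ} (ht : t ∈ Icc (0 : ℝ) 1) :
    ∃ i < n + 1, t ∈ Icc ((i : ℝ) / (n + 1)) ((i + 1) / (n + 1)) := by
  have hN : (0 : ℝ) < n + 1 := by positivity
  simp only [mem_Icc, div_le_iff₀ hN, le_div_iff₀ hN]
  rcases ht.2.eq_or_lt with rfl | ht1
  · exact ⟨n, n.lt_succ_self, by linarith, by linarith⟩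
  · have htN : 0 ≤ t * (n + 1) := mul_nonneg ht.1 hN.le
    refine ⟨⌊t * (n + 1)⌋₊, ?_, Nat.floor_le htN, (Nat.lt_floor_add_one _).le⟩
    exact (Nat.floor_lt htN).2 (by push_cast; nlinarith)

variable {E : Type*}

theorem LipschitzOnWith.closedBall_subset_closedBall_midpoint [SeminormedAddCommGroup E]
    [NormedSpace ℝ E] {γ : ℝ → E} {K : ℝ≥0} {a b t : ℝ}
    (hγ : LipschitzOnWith K γ (Icc a b)) (ht : t ∈ Icc a b) (r : ℝ) :
    closedBall (γ t) r ⊆ closedBall (midpoint ℝ (γ a) (γ b)) (r + K * (b - a) / 2) := by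
  have hab : a ≤ b := ht.1.trans ht.2
  have hmid := dist_midpoint_midpoint_le (γ t) (γ t) (γ a) (γ b)
  rw [midpoint_self] at hmid
  have ha := hγ.dist_le_mul t ht a (left_mem_Icc.2 hab)
  have hb := hγ.dist_le_mul t ht b (right_mem_Icc.2 hab)
  rw [Real.dist_eq, abs_of_nonneg (sub_nonneg.2 ht.1)] at ha
  rw [Real.dist_eq, abs_of_nonpos (sub_nonpos.2 ht.2)] at hb
  exact closedBall_subset_closedBall' (by linarith)

section AddHaar

variable [NormedAddCommGroup E] [NormedSpace ℝ E] [MeasurableSpace E] [BorelSpace E]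
  (μ : Measure E) [μ.IsAddHaarMeasure] {γ : ℝ → E} {K : ℝ≥0}

theorem LipschitzOnWith.measure_biUnion_closedBall_add_le (hγ : LipschitzOnWith K γ (Icc 0 1))
    (r : ℝ) (n : ℕ) :
    μ (⋃ t ∈ Icc (0 : ℝ) 1, closedBall (γ t) r) + n * μ (closedBall 0 r) ≤
      (n + 1) * μ (closedBall 0 (r + K / (2 * (n + 1)))) := by
  set x : ℕ → ℝ := fun i ↦ i / (n + 1)
  set ρ := r + K / (2 * (n + 1))
  set B : ℕ → Set E := fun i ↦ closedBall (midpoint ℝ (γ (x i)) (γ (x (i + 1)))) ρ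
  have hx : ∀ i ≤ n + 1, x i ∈ Icc 0 1 := fun i hi ↦
    ⟨by positivity, div_le_one_of_le₀ (by exact_mod_cast hi) (by positivity)⟩
  have hB : ∀ i < n + 1, ∀ t ∈ Icc (x i) (x (i + 1)), closedBall (γ t) r ⊆ B i := by
    intro i hi t ht
    have hρ : r + K * (x (i + 1) - x i) / 2 = ρ := by
      simp only [x, ρ]; push_cast; field_simp; ring
    change closedBall (γ t) r ⊆ closedBall _ ρ
    rw [← hρ]
    have hγi := hγ.mono (Icc_subset_Icc (hx i hi.le).1 (hx (i + 1) hi).2)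
    exact hγi.closedBall_subset_closedBall_midpoint ht r
  have hcover : ⋃ t ∈ Icc (0 : ℝ) 1, closedBall (γ t) r ⊆ ⋃ i < n + 1, B i := by
    refine iUnion₂_subset fun t ht ↦ ?_
    obtain ⟨i, hi, hti⟩ := exists_lt_succ_mem_Icc_div n ht
    refine (hB i hi t ?_).trans (subset_iUnion₂ (s := fun i (_ : i < n + 1) ↦ B i) i hi)
    simpa [x] using hti
  have hoverlap : ∀ i < n, closedBall (γ (x (i + 1))) r ⊆ B i ∩ B (i + 1) := fun i hi ↦
    subset_inter (hB i (by omega) _ (right_mem_Icc.2 (by simp only [x]; gcongr; simp)))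
      (hB (i + 1) (by omega) _ (left_mem_Icc.2 (by simp only [x]; gcongr; simp)))
  calc μ (⋃ t ∈ Icc (0 : ℝ) 1, closedBall (γ t) r) + n * μ (closedBall 0 r)
      = μ (⋃ t ∈ Icc (0 : ℝ) 1, closedBall (γ t) r)
          + ∑ i ∈ Finset.range n, μ (closedBall (γ (x (i + 1))) r) := by
        simp [Measure.addHaar_closedBall_center μ _ r]
    _ ≤ μ (⋃ i < n + 1, B i) + ∑ i ∈ Finset.range n, μ (B i ∩ B (i + 1)) := by
        gcongr with i hi
        exact hoverlap i (Finset.mem_range.1 hi)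
    _ ≤ ∑ i ∈ Finset.range (n + 1), μ (B i) :=
        measure_biUnion_lt_succ_add_sum_inter_le μ (fun _ ↦ measurableSet_closedBall) n
    _ = (n + 1) * μ (closedBall 0 ρ) := by
        simp [B, Measure.addHaar_closedBall_center μ _ ρ]

theorem LipschitzOnWith.addHaar_biUnion_closedBall_le_add (hγ : LipschitzOnWith K γ (Icc 0 1))
    (hE : finrank ℝ E = 2) {r : ℝ} (hr : 0 ≤ r) (n : ℕ) :
    μ (⋃ t ∈ Icc (0 : ℝ) 1, closedBall (γ t) r) ≤
      ENNReal.ofReal (r ^ 2 + K * r + K ^ 2 / 4 * (1 / (n + 1))) * μ (closedBall 0 1) := by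
  have : FiniteDimensional ℝ E := Module.finite_of_finrank_eq_succ hE
  have h := hγ.measure_biUnion_closedBall_add_le μ r n
  rw [Measure.addHaar_closedBall' μ (0 : E) hr,
    Measure.addHaar_closedBall' μ (0 : E) (r := r + K / (2 * (n + 1))) (by positivity), hE] at h
  have hsplit : (n + 1 : ℝ≥0∞) * ENNReal.ofReal ((r + K / (2 * (n + 1))) ^ 2) =
      n * ENNReal.ofReal (r ^ 2) +
        ENNReal.ofReal (r ^ 2 + K * r + K ^ 2 / 4 * (1 / (n + 1))) := by
    rw [← ENNReal.ofReal_natCast, ← ENNReal.ofReal_one,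
      ← ENNReal.ofReal_add (by positivity) zero_le_one, ← ENNReal.ofReal_mul (by positivity),
      ← ENNReal.ofReal_mul (by positivity),
      ← ENNReal.ofReal_add (by positivity) (by positivity)]
    congr 1
    field_simp
    ring
  rw [← mul_assoc, ← mul_assoc ((n : ℝ≥0∞) + 1), hsplit, add_mul, add_comm] at h
  exact (ENNReal.add_le_add_iff_left
    (ENNReal.mul_ne_top (by finiteness) measure_closedBall_lt_top.ne)).1 h

theorem LipschitzOnWith.addHaar_biUnion_closedBall_le (hγ : LipschitzOnWith K γ (Icc 0 1))
    (hE : finrank ℝ E = 2) {r : ℝ} (hr : 0 ≤ r) :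
    μ (⋃ t ∈ Icc (0 : ℝ) 1, closedBall (γ t) r) ≤
      ENNReal.ofReal (r ^ 2 + K * r) * μ (closedBall 0 1) := by
  have : FiniteDimensional ℝ E := Module.finite_of_finrank_eq_succ hE
  have hlim : Tendsto (fun n : ℕ ↦ ENNReal.ofReal (r ^ 2 + K * r + K ^ 2 / 4 * (1 / (n + 1))))
      atTop (𝓝 (ENNReal.ofReal (r ^ 2 + K * r))) := by
    refine ENNReal.tendsto_ofReal ?_
    simpa using tendsto_const_nhds.add
      (tendsto_one_div_add_atTop_nhds_zero_nat.const_mul (K ^ 2 / 4 : ℝ))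
  exact ge_of_tendsto' (ENNReal.Tendsto.mul_const hlim (.inr measure_closedBall_lt_top.ne))
    (hγ.addHaar_biUnion_closedBall_le_add μ hE hr)

end AddHaar

theorem volume_setOf_abs_add_abs_le_one : volume {p : ℝ × ℝ | |p.1| + |p.2| ≤ 1} = 2 := by
  have h := volume_sum_rpow_le (Fin 2) (p := 1) le_rfl 1
  rw [← (volume_preserving_finTwoArrow ℝ).measure_preimage_equiv]
  norm_num [Real.Gamma_two, Fin.sum_univ_two] at h ⊢
  convert h using 2

theorem dist_toLp_one_eq_dist1 (p q : ℝ × ℝ) :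
    dist (WithLp.toLp 1 p) (WithLp.toLp 1 q) = dist1 p q := by
  simp [WithLp.prod_dist_eq_of_L1, Real.dist_eq, dist1]

theorem stmt12 (r P : ℝ) (hr : 0 < r) (hP : 0 < P) (γ : ℝ → ℝ × ℝ)
    (hlip : ∀ s ∈ Set.Icc (0:ℝ) 1, ∀ t ∈ Set.Icc (0:ℝ) 1,
      dist1 (γ s) (γ t) ≤ P * |s - t|) :
    volume {p : ℝ × ℝ | ∃ t ∈ Set.Icc (0:ℝ) 1, dist1 p (γ t) ≤ r} ≤
      ENNReal.ofReal (2*r*P + 2*r^2) := by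
  set μ : Measure (WithLp 1 (ℝ × ℝ)) := volume.map (WithLp.toLp 1)
  have : μ.IsAddHaarMeasure :=
    (WithLp.prodContinuousLinearEquiv 1 ℝ ℝ ℝ).symm.isAddHaarMeasure_map volume
  have hμ (s : Set (WithLp 1 (ℝ × ℝ))) : μ s = volume (WithLp.toLp 1 ⁻¹' s) :=
    (MeasurableEquiv.toLp 1 (ℝ × ℝ)).map_apply s
  have hfinrank : finrank ℝ (WithLp 1 (ℝ × ℝ)) = 2 := by
    simp [(WithLp.prodContinuousLinearEquiv 1 ℝ ℝ ℝ).toLinearEquiv.finrank_eq]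
  have hγ : LipschitzOnWith P.toNNReal (fun t ↦ WithLp.toLp 1 (γ t)) (Icc 0 1) :=
    .of_dist_le_mul fun s hs t ht ↦ by
      simpa [dist_toLp_one_eq_dist1, Real.coe_toNNReal _ hP.le, Real.dist_eq] using hlip s hs t ht
  have hunit : μ (closedBall 0 1) = 2 := by
    rw [hμ, ← volume_setOf_abs_add_abs_le_one, ← WithLp.toLp_zero (p := 1) (V := ℝ × ℝ)]
    congr 1
    ext p
    simp [-WithLp.toLp_zero, dist_toLp_one_eq_dist1, dist1]
  calc volume {p : ℝ × ℝ | ∃ t ∈ Set.Icc (0:ℝ) 1, dist1 p (γ t) ≤ r}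
      = μ (⋃ t ∈ Icc (0 : ℝ) 1, closedBall (WithLp.toLp 1 (γ t)) r) := by
        rw [hμ]; congr 1; ext; simp [dist_toLp_one_eq_dist1]
    _ ≤ ENNReal.ofReal (r ^ 2 + P.toNNReal * r) * μ (closedBall 0 1) :=
        hγ.addHaar_biUnion_closedBall_le μ hfinrank hr.le
    _ = ENNReal.ofReal (2*r*P + 2*r^2) := by
        rw [hunit, Real.coe_toNNReal _ hP.le, ← ENNReal.ofReal_ofNat 2,
          ← ENNReal.ofReal_mul (by positivity)]
        ring_nf
end

section
/- Let k > 0 and let G be a grid (finite union of axis-aligned integral unit squares) of area A > 2k². Then any covering path of G with stop count T ≥ 2 and length L satisfies (T-1)·f(L/(T-1)) ≥ A - 2k², where f(d) = d(2k - d/2) for d ∈ (0,2k] and f(d) = 2k² for d > 2k. -/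
open MeasureTheory

/-- The integral unit square with lower-left corner `q`. -/
def unitSquare (q : ℤ × ℤ) : Set (ℝ × ℝ) :=
  Set.Icc (q.1 : ℝ) ((q.1 : ℝ) + 1) ×ˢ Set.Icc (q.2 : ℝ) ((q.2 : ℝ) + 1)

/-- A grid is a (finite) union of integral unit squares. -/
def IsGrid (G : Set (ℝ × ℝ)) : Prop :=
  ∃ Q : Finset (ℤ × ℤ), G = ⋃ q ∈ Q, unitSquare q

noncomputable def psiMap : (ℝ × ℝ) →ₗ[ℝ] (ℝ × ℝ) :=
  Matrix.toLin (Module.Basis.finTwoProd ℝ) (Module.Basis.finTwoProd ℝ) !![1, 1; 1, -1]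
lemma psiMap_apply (p : ℝ × ℝ) : psiMap p = (p.1 + p.2, p.1 - p.2) := by
  simp [psiMap, Matrix.toLin_finTwoProd_apply]; ring_nf
lemma psiMap_det : LinearMap.det psiMap = -2 := by
  simp [psiMap, LinearMap.det_toLin, Matrix.det_fin_two_of]; norm_num
lemma vol_psi_preimage (s : Set (ℝ × ℝ)) :
    volume (psiMap ⁻¹' s) = ENNReal.ofReal (1/2) * volume s := by
  rw [Measure.addHaar_preimage_linearMap volume (by rw [psiMap_det]; norm_num) s, psiMap_det]
  norm_num [abs_of_nonneg]
lemma vol_prod_Icc (a b c d : ℝ) :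
    volume (Set.Icc a b ×ˢ Set.Icc c d) = ENNReal.ofReal (b - a) * ENNReal.ofReal (d - c) := by
  rw [Measure.volume_eq_prod, Measure.prod_prod, Real.volume_Icc, Real.volume_Icc]

def ball1 (k : ℝ) (p : ℝ × ℝ) : Set (ℝ × ℝ) := {x | dist1 x p ≤ k}

def sqOf (k : ℝ) (p : ℝ × ℝ) : Set (ℝ × ℝ) :=
  Set.Icc (p.1 + p.2 - k) (p.1 + p.2 + k) ×ˢ Set.Icc (p.1 - p.2 - k) (p.1 - p.2 + k)

lemma abs_pair (a b k : ℝ) : |a| + |b| ≤ k ↔ |a + b| ≤ k ∧ |a - b| ≤ k := by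
  rcases abs_cases a with ⟨h1, h2⟩ | ⟨h1, h2⟩ <;> rcases abs_cases b with ⟨h3, h4⟩ | ⟨h3, h4⟩ <;>
    rcases abs_cases (a + b) with ⟨h5, h6⟩ | ⟨h5, h6⟩ <;>
    rcases abs_cases (a - b) with ⟨h7, h8⟩ | ⟨h7, h8⟩ <;>
    constructor <;> intro h <;> first | (constructor <;> linarith) | (obtain ⟨hx, hy⟩ := h; linarith)

lemma ball1_eq (k : ℝ) (p : ℝ × ℝ) : ball1 k p = psiMap ⁻¹' sqOf k p := by
  ext x
  simp only [ball1, sqOf, dist1, Set.mem_setOf_eq, Set.mem_preimage, psiMap_apply,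
    Set.mem_prod, Set.mem_Icc]
  rw [abs_pair, abs_le, abs_le]
  constructor <;> rintro ⟨⟨h1, h2⟩, ⟨h3, h4⟩⟩ <;>
    exact ⟨⟨by linarith, by linarith⟩, ⟨by linarith, by linarith⟩⟩

lemma vol_ball1 (k : ℝ) (hk : 0 < k) (p : ℝ × ℝ) :
    volume (ball1 k p) = ENNReal.ofReal (2*k^2) := by
  rw [ball1_eq, vol_psi_preimage, sqOf, vol_prod_Icc]
  have : (p.1 + p.2 + k) - (p.1 + p.2 - k) = 2*k := by ring
  rw [this]
  have : (p.1 - p.2 + k) - (p.1 - p.2 - k) = 2*k := by ring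
  rw [this, ← ENNReal.ofReal_mul (by linarith), ← ENNReal.ofReal_mul (by norm_num)]
  congr 1; ring

lemma min_max_interval (a b k : ℝ) :
    min (a + k) (b + k) - max (a - k) (b - k) = 2*k - |a - b| := by
  rcases le_total a b with h | h
  · rw [min_eq_left (by linarith), max_eq_right (by linarith), abs_of_nonpos (by linarith)]; ring
  · rw [min_eq_right (by linarith), max_eq_left (by linarith), abs_of_nonneg (by linarith)]; ring

lemma f_eq (k d : ℝ) : f k d = 2*k^2 - (max (2*k - d) 0)^2/2 := by
  unfold f
  split_ifs with h
  · rw [max_eq_left (by linarith)]; ring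
  · rw [max_eq_right (by linarith)]; ring

lemma vol_ball1_diff (k : ℝ) (hk : 0 < k) (p q : ℝ × ℝ) :
    volume (ball1 k q \ ball1 k p) ≤ ENNReal.ofReal (f k (dist1 q p)) := by
  set d := dist1 q p with hd
  have hd0 : 0 ≤ d := by rw [hd, dist1]; positivity
  set c := max (2*k - d) 0 with hc
  have hc0 : 0 ≤ c := le_max_right _ _
  rw [ball1_eq, ball1_eq, ← Set.preimage_diff, vol_psi_preimage]
  -- volume of intersection of the two squares
  have hu : |(q.1 + q.2) - (p.1 + p.2)| ≤ d := by
    have := abs_add_le (q.1 - p.1) (q.2 - p.2)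
    rw [hd, dist1]
    calc |(q.1 + q.2) - (p.1 + p.2)| = |(q.1 - p.1) + (q.2 - p.2)| := by ring_nf
    _ ≤ _ := abs_add_le _ _
  have hv : |(q.1 - q.2) - (p.1 - p.2)| ≤ d := by
    rw [hd, dist1]
    calc |(q.1 - q.2) - (p.1 - p.2)| = |(q.1 - p.1) - (q.2 - p.2)| := by ring_nf
    _ ≤ _ := abs_sub _ _
  have ofReal_max (x : ℝ) : ENNReal.ofReal (max x 0) = ENNReal.ofReal x := by
    rcases le_total x 0 with h | h
    · rw [max_eq_right h, ENNReal.ofReal_of_nonpos h, ENNReal.ofReal_zero]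
    · rw [max_eq_left h]
  have hinter : ENNReal.ofReal (c^2) ≤ volume (sqOf k q ∩ sqOf k p) := by
    rw [sqOf, sqOf, Set.prod_inter_prod, Set.Icc_inter_Icc, Set.Icc_inter_Icc, vol_prod_Icc,
      min_max_interval, min_max_interval]
    have h1 : ENNReal.ofReal c ≤ ENNReal.ofReal (2*k - |q.1 + q.2 - (p.1 + p.2)|) := by
      rw [hc, ofReal_max]; exact ENNReal.ofReal_le_ofReal (by linarith)
    have h2 : ENNReal.ofReal c ≤ ENNReal.ofReal (2*k - |q.1 - q.2 - (p.1 - p.2)|) := by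
      rw [hc, ofReal_max]; exact ENNReal.ofReal_le_ofReal (by linarith)
    calc ENNReal.ofReal (c^2) = ENNReal.ofReal c * ENNReal.ofReal c := by
          rw [← ENNReal.ofReal_mul hc0]; ring_nf
    _ ≤ _ := mul_le_mul' h1 h2
  have hsq_meas : MeasurableSet (sqOf k p) := measurableSet_Icc.prod measurableSet_Icc
  have hsq_measq : MeasurableSet (sqOf k q) := measurableSet_Icc.prod measurableSet_Icc
  have hfin : volume (sqOf k q ∩ sqOf k p) ≠ ⊤ := by
    refine ne_top_of_le_ne_top ?_ (measure_mono Set.inter_subset_left)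
    rw [sqOf, vol_prod_Icc]
    exact ENNReal.mul_ne_top ENNReal.ofReal_ne_top ENNReal.ofReal_ne_top
  have hvolq : volume (sqOf k q) = ENNReal.ofReal (4*k^2) := by
    rw [sqOf, vol_prod_Icc]
    have e1 : q.1 + q.2 + k - (q.1 + q.2 - k) = 2*k := by ring
    have e2 : q.1 - q.2 + k - (q.1 - q.2 - k) = 2*k := by ring
    rw [e1, e2, ← ENNReal.ofReal_mul (by linarith)]
    congr 1; ring
  have hdiff : volume (sqOf k q \ sqOf k p)
      ≤ ENNReal.ofReal (4*k^2) - ENNReal.ofReal (c^2) := by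
    have e : sqOf k q \ sqOf k p = sqOf k q \ (sqOf k q ∩ sqOf k p) := by
      rw [Set.diff_self_inter]
    rw [e, measure_diff Set.inter_subset_left
      ((hsq_measq.inter hsq_meas).nullMeasurableSet) hfin, hvolq]
    exact tsub_le_tsub le_rfl hinter
  calc ENNReal.ofReal (1/2) * volume (sqOf k q \ sqOf k p)
      ≤ ENNReal.ofReal (1/2) * (ENNReal.ofReal (4*k^2) - ENNReal.ofReal (c^2)) :=
        mul_le_mul' le_rfl hdiff
  _ = ENNReal.ofReal (f k d) := by
      rw [← ENNReal.ofReal_sub _ (by positivity), ← ENNReal.ofReal_mul (by norm_num), f_eq]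
      congr 1; rw [← hc]; ring

lemma f_nonneg (k d : ℝ) (hk : 0 < k) (hd : 0 ≤ d) : 0 ≤ f k d := by
  unfold f; split_ifs with h
  · nlinarith
  · positivity

lemma f_tangent (k d m : ℝ) (hk : 0 < k) (hd : 0 ≤ d) (hm : 0 ≤ m) :
    f k d ≤ f k m + (max (2*k - m) 0) * (d - m) := by
  unfold f
  split_ifs with h1 h2 h2
  · rw [max_eq_left (by linarith)]; nlinarith [sq_nonneg (d - m)]
  · rw [max_eq_right (by linarith)]; nlinarith [sq_nonneg (2*k - d)]
  · rw [max_eq_left (by linarith)]; nlinarith [sq_nonneg (2*k - m)]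
  · rw [max_eq_right (by linarith)]; linarith

lemma f_sum_le (k : ℝ) (hk : 0 < k) (n : ℕ) (hn : 0 < n) (d : ℕ → ℝ)
    (hd : ∀ i, 0 ≤ d i) :
    ∑ i ∈ Finset.range n, f k (d i)
      ≤ (n : ℝ) * f k ((∑ i ∈ Finset.range n, d i) / n) := by
  set Ld := ∑ i ∈ Finset.range n, d i with hLd
  have hL0 : 0 ≤ Ld := Finset.sum_nonneg fun i _ => hd i
  set m := Ld / n with hm
  have hm0 : 0 ≤ m := by positivity
  set c := max (2*k - m) 0 with hc
  have key : ∀ i ∈ Finset.range n, f k (d i) ≤ f k m + c * (d i - m) :=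
    fun i _ => f_tangent k (d i) m hk (hd i) hm0
  calc ∑ i ∈ Finset.range n, f k (d i) ≤ ∑ i ∈ Finset.range n, (f k m + c * (d i - m)) :=
        Finset.sum_le_sum key
  _ = (n : ℝ) * f k m + c * (Ld - n * m) := by
      rw [Finset.sum_add_distrib, Finset.sum_const, Finset.card_range, ← Finset.mul_sum]
      rw [Finset.sum_sub_distrib, Finset.sum_const, Finset.card_range]
      push_cast; ring
  _ = (n : ℝ) * f k m := by
      have hn' : (n : ℝ) ≠ 0 := Nat.cast_ne_zero.mpr hn.ne'
      have : (n : ℝ) * m = Ld := by rw [hm]; field_simp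
      rw [this]; ring

lemma dist1_nonneg (p q : ℝ × ℝ) : 0 ≤ dist1 p q := by
  unfold dist1; positivity

theorem stmt16 (k : ℝ) (hk : 0 < k) (G : Set (ℝ × ℝ)) (hG : IsGrid G)
    (A : ℝ) (hA : A = (volume G).toReal) (hA2 : 2*k^2 < A)
    (T : ℕ) (hT : 2 ≤ T) (S : ℕ → ℝ × ℝ)
    (hcov : ∀ p ∈ G, ∃ i < T, dist1 p (S i) ≤ k)
    (L : ℝ) (hL : L = ∑ i ∈ Finset.range (T-1), dist1 (S (i+1)) (S i)) :
    A - 2*k^2 ≤ ((T:ℝ) - 1) * f k (L/((T:ℝ) - 1)) := by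
  have hdist := dist1_nonneg
  have hsub : G ⊆ ball1 k (S 0) ∪
      ⋃ i ∈ Finset.range (T-1), (ball1 k (S (i+1)) \ ball1 k (S i)) := by
    intro p hp
    obtain ⟨i, hiT, hpi⟩ := hcov p hp
    clear hpi hiT
    have claim : ∀ i, i < T → dist1 p (S i) ≤ k → p ∈ ball1 k (S 0) ∪
        ⋃ j ∈ Finset.range (T-1), (ball1 k (S (j+1)) \ ball1 k (S j)) := by
      intro i
      induction i with
      | zero => intro _ h; exact Or.inl h
      | succ j ih =>
        intro hlt h
        by_cases hj : p ∈ ball1 k (S j)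
        · exact ih (by omega) hj
        · refine Or.inr (Set.mem_biUnion ?_ ⟨h, hj⟩)
          exact Finset.mem_range.mpr (by omega)
    obtain ⟨i, hiT, hpi⟩ := hcov p hp
    exact claim i hiT hpi
  have hvol : volume G ≤ ENNReal.ofReal (2*k^2)
      + ∑ i ∈ Finset.range (T-1), ENNReal.ofReal (f k (dist1 (S (i+1)) (S i))) := by
    refine (measure_mono hsub).trans ((measure_union_le _ _).trans ?_)
    refine add_le_add (vol_ball1 k hk _).le ?_
    refine (measure_biUnion_finset_le _ _).trans ?_
    exact Finset.sum_le_sum fun i _ => vol_ball1_diff k hk _ _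
  have hFnn : ∀ i ∈ Finset.range (T-1), 0 ≤ f k (dist1 (S (i+1)) (S i)) :=
    fun i _ => f_nonneg k _ hk (hdist _ _)
  have hAle : A ≤ 2*k^2 + ∑ i ∈ Finset.range (T-1), f k (dist1 (S (i+1)) (S i)) := by
    rw [hA]
    refine ENNReal.toReal_le_of_le_ofReal
      (add_nonneg (by positivity) (Finset.sum_nonneg hFnn)) ?_
    rw [ENNReal.ofReal_add (by positivity) (Finset.sum_nonneg hFnn),
      ENNReal.ofReal_sum_of_nonneg hFnn]
    exact hvol
  have hfs := f_sum_le k hk (T-1) (by omega) (fun i => dist1 (S (i+1)) (S i))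
    (fun i => hdist _ _)
  have hcast : ((T-1 : ℕ) : ℝ) = (T:ℝ) - 1 := by
    rw [Nat.cast_sub (by omega)]; norm_num
  rw [hcast, ← hL] at hfs
  linarith
end
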